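/- On a bounded Vilenkin group, for every fixed N ∈ ℕ₊, ∫_{G_m \ I_N} |K_n^ψ(x)| dμ(x) → 0 as n → ∞, where K_n^ψ is the n-th Vilenkin-Fejér kernel. -/

import Mathlib

/-!
Write `F_n = n K_n^ψ = ∑_{k<n} D_k^ψ`. Off `I_t` the kernel `D_{M_t}^ψ` vanishes, so there
`F_{a M_t + q} = (∑_{i<a} r_t^i) F_{M_t} + r_t^a F_q` for `a < m_t`, `q ≤ M_t`; peeling off the
`M`-adic digits of `n` gives, on `G_m \ I_N`,
`|F_n| ≤ B ∑_{N ≤ t ≤ |n|} |F_{M_t}| + M_N²` where `m_k ≤ B`.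
Moreover `F_{M_{t+1}} = m_t 1{x_t = 0} F_{M_t}` off `I_t`, and under Haar measure `x_t` is
uniform and independent of `x_0, …, x_{t-1}`, so `∫_{G_m \ I_N} |F_{M_t}|` is the same for all
`t ≥ N`, hence at most `M_N²`. Therefore `∫_{G_m \ I_N} |K_n^ψ| = O(log n / n)`.
-/

open MeasureTheory Filter Complex

/-- The (bounded) Vilenkin group `G_m = ∏_k Z_{m_k}`. -/
abbrev VilGroup (m : ℕ → ℕ) : Type := Π k, ZMod (m k)

/-- The generalized powers `M_0 = 1`, `M_{k+1} = m_k M_k`. -/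
def Mgen (m : ℕ → ℕ) : ℕ → ℕ
  | 0 => 1
  | k + 1 => m k * Mgen m k

/-- The `j`-th digit of `n` in the `M`-adic (mixed radix) number system. -/
def vDigit (m : ℕ → ℕ) (n j : ℕ) : ℕ := (n / Mgen m j) % m j

/-- The generalized Rademacher functions `r_k(x) = exp(2πi x_k / m_k)`. -/
noncomputable def rademacher (m : ℕ → ℕ) (k : ℕ) (x : VilGroup m) : ℂ :=
  Complex.exp (2 * Real.pi * Complex.I * ((x k).val : ℂ) / (m k : ℂ))

/-- The Vilenkin functions `ψ_n = ∏_k r_k^{n_k}`. -/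
noncomputable def vilenkin (m : ℕ → ℕ) (n : ℕ) (x : VilGroup m) : ℂ :=
  ∏ j ∈ Finset.range (n + 1), (rademacher m j x) ^ (vDigit m n j)

/-- The Vilenkin-Dirichlet kernels `D_k^ψ = ∑_{j<k} ψ_j`. -/
noncomputable def vilenkinDirichlet (m : ℕ → ℕ) (k : ℕ) (x : VilGroup m) : ℂ :=
  ∑ j ∈ Finset.range k, vilenkin m j x

/-- The Vilenkin-Fejér kernels `K_n^ψ = (1/n) ∑_{k<n} D_k^ψ`. -/
noncomputable def vilenkinFejer (m : ℕ → ℕ) (n : ℕ) (x : VilGroup m) : ℂ :=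
  (1 / n) * ∑ k ∈ Finset.range n, vilenkinDirichlet m k x

/-- The cylinder `I_N = I_N(0) = {y : y_0 = ⋯ = y_{N-1} = 0}`. -/
def cylV (m : ℕ → ℕ) (N : ℕ) : Set (VilGroup m) := {y | ∀ j < N, y j = 0}

/-- The Vilenkin interval `I_N(x)`. -/
def cylVAt (m : ℕ → ℕ) (N : ℕ) (x : VilGroup m) : Set (VilGroup m) :=
  {y | ∀ j < N, y j = x j}

/-- `μ` is the normalized Haar measure on `G_m`, characterized by
`μ(I_N(x)) = 1/M_N` for every cylinder. -/
def IsVilHaar (m : ℕ → ℕ) (μ : Measure (VilGroup m)) : Prop :=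
  ∀ (N : ℕ) (x : VilGroup m), μ (cylVAt m N x) = (Mgen m N : ENNReal)⁻¹

/-- The `k`-th Vilenkin-Fourier coefficient. -/
noncomputable def vCoef (m : ℕ → ℕ) (μ : Measure (VilGroup m))
    (f : VilGroup m → ℂ) (k : ℕ) : ℂ :=
  ∫ x, f x * (starRingEnd ℂ) (vilenkin m k x) ∂μ

/-- The partial sums `S_n^ψ f` of the Vilenkin-Fourier series. -/
noncomputable def vPartialSum (m : ℕ → ℕ) (μ : Measure (VilGroup m))
    (f : VilGroup m → ℂ) (n : ℕ) (x : VilGroup m) : ℂ :=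
  ∑ k ∈ Finset.range n, vCoef m μ f k * vilenkin m k x

/-- The Vilenkin-Fejér means `σ_n^ψ f = (1/n) ∑_{k<n} S_k^ψ f`. -/
noncomputable def vFejerMean (m : ℕ → ℕ) (μ : Measure (VilGroup m))
    (f : VilGroup m → ℂ) (n : ℕ) (x : VilGroup m) : ℂ :=
  (1 / n) * ∑ k ∈ Finset.range n, vPartialSum m μ f k x

open Finset

section digits

variable {m : ℕ → ℕ}

lemma Mgen_succ (t : ℕ) : Mgen m (t + 1) = m t * Mgen m t := rfl

lemma Mgen_pos (hm : ∀ k, 2 ≤ m k) (t : ℕ) : 0 < Mgen m t := by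
  induction t with
  | zero => exact Nat.one_pos
  | succ t ih => exact Nat.mul_pos (by linarith [hm t]) ih

lemma two_pow_le_Mgen (hm : ∀ k, 2 ≤ m k) (t : ℕ) : 2 ^ t ≤ Mgen m t := by
  induction t with
  | zero => rfl
  | succ t ih => rw [pow_succ', Mgen_succ]; exact Nat.mul_le_mul (hm t) ih

lemma Mgen_dvd_Mgen {s t : ℕ} (h : s ≤ t) : Mgen m s ∣ Mgen m t := by
  induction t, h using Nat.le_induction with
  | base => exact dvd_rfl
  | succ t _ ih => exact ih.mul_left (m t)

lemma Mgen_mono (hm : ∀ k, 2 ≤ m k) {s t : ℕ} (h : s ≤ t) : Mgen m s ≤ Mgen m t :=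
  Nat.le_of_dvd (Mgen_pos hm t) (Mgen_dvd_Mgen h)

lemma vDigit_eq_zero_of_lt {n j : ℕ} (h : n < Mgen m j) : vDigit m n j = 0 := by
  simp [vDigit, Nat.div_eq_of_lt h]

lemma vDigit_mul_Mgen_add (hm : ∀ k, 2 ≤ m k) {c t p : ℕ} (hc : c < m t) (hp : p < Mgen m t)
    (j : ℕ) : vDigit m (c * Mgen m t + p) j = if j = t then c else vDigit m p j := by
  have hMj := Mgen_pos hm j
  rcases lt_trichotomy j t with hjt | rfl | hjt
  · obtain ⟨q, hq⟩ := Mgen_dvd_Mgen (m := m) (Nat.succ_le_of_lt hjt)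
    rw [if_neg hjt.ne, vDigit, vDigit, hq, Mgen_succ,
      show c * (m j * Mgen m j * q) + p = Mgen m j * (m j * (c * q)) + p by ring,
      Nat.mul_add_div hMj, Nat.mul_add_mod]
  · rw [if_pos rfl, vDigit, Nat.mul_comm, Nat.mul_add_div hMj, Nat.div_eq_of_lt hp, Nat.add_zero,
      Nat.mod_eq_of_lt hc]
  · have hlt : c * Mgen m t + p < Mgen m j := by
      calc c * Mgen m t + p < (c + 1) * Mgen m t := by linarith
        _ ≤ Mgen m (t + 1) := by rw [Mgen_succ]; exact Nat.mul_le_mul_right _ hc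
        _ ≤ Mgen m j := Mgen_mono hm hjt
    rw [if_neg hjt.ne', vDigit_eq_zero_of_lt hlt,
      vDigit_eq_zero_of_lt (lt_of_le_of_lt (Nat.le_add_left _ _) hlt)]

end digits

section rademacher

variable {m : ℕ → ℕ}

lemma rademacher_eq_pow (k : ℕ) (x : VilGroup m) :
    rademacher m k x = Complex.exp (2 * Real.pi * Complex.I / m k) ^ (x k).val := by
  rw [rademacher, ← Complex.exp_nat_mul]
  ring_nf

variable {k : ℕ} [NeZero (m k)]

lemma isPrimitiveRoot_exp_div :
    IsPrimitiveRoot (Complex.exp (2 * Real.pi * Complex.I / m k)) (m k) :=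
  Complex.isPrimitiveRoot_exp _ (NeZero.ne _)

lemma norm_rademacher (x : VilGroup m) : ‖rademacher m k x‖ = 1 := by
  rw [rademacher_eq_pow, norm_pow, isPrimitiveRoot_exp_div.norm'_eq_one (NeZero.ne _), one_pow]

lemma sum_rademacher_pow (x : VilGroup m) :
    ∑ c ∈ range (m k), rademacher m k x ^ c = if x k = 0 then (m k : ℂ) else 0 := by
  have hζ : IsPrimitiveRoot _ (m k) := isPrimitiveRoot_exp_div
  split_ifs with hx
  · simp [rademacher, hx]
  · have hr : rademacher m k x ≠ 1 := by
      rw [rademacher_eq_pow, Ne, hζ.pow_eq_one_iff_dvd]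
      exact fun hdvd => hx ((ZMod.val_eq_zero _).1 (Nat.eq_zero_of_dvd_of_lt hdvd (ZMod.val_lt _)))
    rw [geom_sum_eq hr, rademacher_eq_pow, ← pow_mul, mul_comm (x k).val, pow_mul, hζ.pow_eq_one,
      one_pow, sub_self, zero_div]

end rademacher

section vilenkin

variable {m : ℕ → ℕ} (hm : ∀ k, 2 ≤ m k)
include hm

lemma vilenkin_eq_prod_range {n R : ℕ} (hR : n < Mgen m R) (x : VilGroup m) :
    vilenkin m n x = ∏ j ∈ range R, rademacher m j x ^ vDigit m n j := by
  have hvanish : ∀ {S T}, S ≤ T → (∀ j, S ≤ j → n < Mgen m j) →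
      ∏ j ∈ range T, rademacher m j x ^ vDigit m n j
        = ∏ j ∈ range S, rademacher m j x ^ vDigit m n j := fun hST h =>
    (prod_subset (range_subset_range.2 hST) fun j _ hj => by
      rw [vDigit_eq_zero_of_lt (h j (not_lt.1 (mem_range.not.1 hj))), pow_zero]).symm
  have hlarge : ∀ j, min R (n + 1) ≤ j → n < Mgen m j := by
    intro j hj
    rcases min_le_iff.1 hj with hRj | hnj
    · exact lt_of_lt_of_le hR (Mgen_mono hm hRj)
    · calc n < 2 ^ j := lt_of_lt_of_le Nat.lt_two_pow_self (Nat.pow_le_pow_right two_pos (by omega))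
        _ ≤ Mgen m j := two_pow_le_Mgen hm j
  rw [vilenkin, hvanish (min_le_right _ _) hlarge, hvanish (min_le_left _ _) hlarge]

lemma vilenkin_mul_Mgen_add {c t p : ℕ} (hc : c < m t) (hp : p < Mgen m t) (x : VilGroup m) :
    vilenkin m (c * Mgen m t + p) x = rademacher m t x ^ c * vilenkin m p x := by
  have hlt : c * Mgen m t + p < Mgen m (t + 1) := by
    calc c * Mgen m t + p < (c + 1) * Mgen m t := by linarith
      _ ≤ Mgen m (t + 1) := by rw [Mgen_succ]; exact Nat.mul_le_mul_right _ hc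
  rw [vilenkin_eq_prod_range hm hlt,
    vilenkin_eq_prod_range hm (hp.trans_le (Mgen_mono hm t.le_succ)),
    prod_range_succ, prod_range_succ, vDigit_mul_Mgen_add hm hc hp, if_pos rfl,
    vDigit_eq_zero_of_lt hp, pow_zero, mul_one, mul_comm]
  exact congrArg _ (prod_congr rfl fun j hj => by
    rw [vDigit_mul_Mgen_add hm hc hp, if_neg (mem_range.1 hj).ne])

lemma vilenkin_dependsOn {n t : ℕ} (hn : n < Mgen m t) : DependsOn (vilenkin m n) (Set.Iio t) :=
  fun x y h => by
    rw [vilenkin_eq_prod_range hm hn, vilenkin_eq_prod_range hm hn]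
    exact prod_congr rfl fun j hj => by rw [rademacher, rademacher, h j (mem_range.1 hj)]

end vilenkin

lemma norm_vilenkin {m : ℕ → ℕ} [∀ k, NeZero (m k)] (n : ℕ) (x : VilGroup m) :
    ‖vilenkin m n x‖ = 1 := by
  simp [vilenkin, norm_rademacher]

/-- `n K_n^ψ`; unlike `K_n^ψ` itself it satisfies exact recursions in `n`. -/
noncomputable def vilenkinDirichletSum (m : ℕ → ℕ) (n : ℕ) (x : VilGroup m) : ℂ :=
  ∑ k ∈ range n, vilenkinDirichlet m k x

lemma vilenkinFejer_eq_one_div_mul {m : ℕ → ℕ} (n : ℕ) (x : VilGroup m) :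
    vilenkinFejer m n x = 1 / n * vilenkinDirichletSum m n x :=
  rfl

section norms

variable {m : ℕ → ℕ} [∀ k, NeZero (m k)]

lemma norm_vilenkinDirichlet_le (k : ℕ) (x : VilGroup m) : ‖vilenkinDirichlet m k x‖ ≤ k :=
  (norm_sum_le _ _).trans (by simp [norm_vilenkin])

lemma norm_vilenkinDirichletSum_le (n : ℕ) (x : VilGroup m) :
    ‖vilenkinDirichletSum m n x‖ ≤ (n : ℝ) ^ 2 :=
  calc ‖vilenkinDirichletSum m n x‖ ≤ ∑ _k ∈ range n, (n : ℝ) :=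
        norm_sum_le_of_le _ fun k hk =>
          (norm_vilenkinDirichlet_le k x).trans (by exact_mod_cast (mem_range.1 hk).le)
    _ = (n : ℝ) ^ 2 := by simp [sq]

end norms

section kernels

variable {m : ℕ → ℕ} (hm : ∀ k, 2 ≤ m k)
include hm

lemma vilenkinDirichlet_mul_Mgen_add {c t p : ℕ} (hc : c < m t) (hp : p ≤ Mgen m t)
    (x : VilGroup m) :
    vilenkinDirichlet m (c * Mgen m t + p) x
      = vilenkinDirichlet m (c * Mgen m t) x + rademacher m t x ^ c * vilenkinDirichlet m p x := by
  rw [vilenkinDirichlet, sum_range_add, vilenkinDirichlet, vilenkinDirichlet, mul_sum]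
  exact congrArg _ (sum_congr rfl fun i hi =>
    vilenkin_mul_Mgen_add hm hc ((mem_range.1 hi).trans_le hp) x)

lemma vilenkinDirichlet_mul_Mgen {c t : ℕ} (hc : c ≤ m t) (x : VilGroup m) :
    vilenkinDirichlet m (c * Mgen m t) x
      = (∑ i ∈ range c, rademacher m t x ^ i) * vilenkinDirichlet m (Mgen m t) x := by
  induction c with
  | zero => simp [vilenkinDirichlet]
  | succ c ih =>
    rw [Nat.succ_mul, vilenkinDirichlet_mul_Mgen_add hm (by omega) le_rfl, ih (by omega),
      sum_range_succ]
    ring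

lemma vilenkinDirichlet_Mgen_succ (t : ℕ) (x : VilGroup m) :
    vilenkinDirichlet m (Mgen m (t + 1)) x
      = (if x t = 0 then (m t : ℂ) else 0) * vilenkinDirichlet m (Mgen m t) x := by
  have : NeZero (m t) := NeZero.of_gt (hm t)
  rw [Mgen_succ, vilenkinDirichlet_mul_Mgen hm le_rfl, sum_rademacher_pow]

lemma vilenkinDirichlet_Mgen_of_notMem {t : ℕ} {x : VilGroup m} (hx : x ∉ cylV m t) :
    vilenkinDirichlet m (Mgen m t) x = 0 := by
  induction t with
  | zero => exact (hx fun j hj => absurd hj (Nat.not_lt_zero j)).elim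
  | succ t ih =>
    rw [vilenkinDirichlet_Mgen_succ hm]
    by_cases hxt : x ∈ cylV m t
    · have hxt' : x t ≠ 0 := fun h0 =>
        hx fun j hj => (Nat.lt_succ_iff_lt_or_eq.1 hj).elim (hxt j) fun e => e ▸ h0
      rw [if_neg hxt', zero_mul]
    · rw [ih hxt, mul_zero]

lemma vilenkinDirichletSum_dependsOn {n t : ℕ} (hn : n ≤ Mgen m t) :
    DependsOn (vilenkinDirichletSum m n) (Set.Iio t) := fun x y h =>
  sum_congr rfl fun k hk => sum_congr rfl fun j hj =>
    vilenkin_dependsOn hm (by linarith [mem_range.1 hk, mem_range.1 hj]) h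

variable {t : ℕ} {x : VilGroup m} (hx : x ∉ cylV m t)
include hx

lemma vilenkinDirichletSum_mul_Mgen_add {c q : ℕ} (hc : c < m t) (hq : q ≤ Mgen m t) :
    vilenkinDirichletSum m (c * Mgen m t + q) x
      = vilenkinDirichletSum m (c * Mgen m t) x
        + rademacher m t x ^ c * vilenkinDirichletSum m q x := by
  rw [vilenkinDirichletSum, sum_range_add, vilenkinDirichletSum, vilenkinDirichletSum, mul_sum]
  refine congrArg _ (sum_congr rfl fun p hp => ?_)
  rw [vilenkinDirichlet_mul_Mgen_add hm hc ((mem_range.1 hp).le.trans hq),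
    vilenkinDirichlet_mul_Mgen hm hc.le, vilenkinDirichlet_Mgen_of_notMem hm hx, mul_zero, zero_add]

lemma vilenkinDirichletSum_mul_Mgen {c : ℕ} (hc : c ≤ m t) :
    vilenkinDirichletSum m (c * Mgen m t) x
      = (∑ i ∈ range c, rademacher m t x ^ i) * vilenkinDirichletSum m (Mgen m t) x := by
  induction c with
  | zero => simp [vilenkinDirichletSum]
  | succ c ih =>
    rw [Nat.succ_mul, vilenkinDirichletSum_mul_Mgen_add hm hx (by omega) le_rfl, ih (by omega),
      sum_range_succ]
    ring

lemma vilenkinDirichletSum_Mgen_succ :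
    vilenkinDirichletSum m (Mgen m (t + 1)) x
      = (if x t = 0 then (m t : ℂ) else 0) * vilenkinDirichletSum m (Mgen m t) x := by
  have : NeZero (m t) := NeZero.of_gt (hm t)
  rw [Mgen_succ, vilenkinDirichletSum_mul_Mgen hm hx le_rfl, sum_rademacher_pow]

end kernels

lemma norm_vilenkinDirichletSum_le_sum {m : ℕ → ℕ} (hm : ∀ k, 2 ≤ m k) {B N : ℕ}
    (hB : ∀ k, m k ≤ B) {x : VilGroup m} (hx : x ∉ cylV m N) (K : ℕ) {n : ℕ}
    (hn : n < Mgen m K) :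
    ‖vilenkinDirichletSum m n x‖
      ≤ B * ∑ t ∈ Ico N K, ‖vilenkinDirichletSum m (Mgen m t) x‖ + (Mgen m N : ℝ) ^ 2 := by
  have : ∀ k, NeZero (m k) := fun k => NeZero.of_gt (hm k)
  induction K generalizing n with
  | zero =>
    rw [Nat.lt_one_iff.1 hn]
    simp [vilenkinDirichletSum]
  | succ K ih =>
    rcases lt_or_ge K N with hKN | hNK
    · have hnN : (n : ℝ) ≤ Mgen m N := by exact_mod_cast hn.le.trans (Mgen_mono hm hKN)
      calc ‖vilenkinDirichletSum m n x‖ ≤ (n : ℝ) ^ 2 := norm_vilenkinDirichletSum_le n x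
        _ ≤ (Mgen m N : ℝ) ^ 2 := by gcongr
        _ ≤ _ := le_add_of_nonneg_left (by positivity)
    · have hxK : x ∉ cylV m K := fun h => hx fun j hj => h j (hj.trans_le hNK)
      set a := n / Mgen m K
      set q := n % Mgen m K
      have ha : a < m K := by rwa [Nat.div_lt_iff_lt_mul (Mgen_pos hm K), ← Mgen_succ]
      have hq : q < Mgen m K := Nat.mod_lt _ (Mgen_pos hm K)
      have hgeom : ‖∑ i ∈ range a, rademacher m K x ^ i‖ ≤ a :=
        (norm_sum_le_of_le _ fun i _ => (by rw [norm_pow, norm_rademacher, one_pow])).trans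
          (by simp)
      calc ‖vilenkinDirichletSum m n x‖
          = ‖(∑ i ∈ range a, rademacher m K x ^ i) * vilenkinDirichletSum m (Mgen m K) x
              + rademacher m K x ^ a * vilenkinDirichletSum m q x‖ := by
            rw [← vilenkinDirichletSum_mul_Mgen hm hxK ha.le,
              ← vilenkinDirichletSum_mul_Mgen_add hm hxK ha hq.le, Nat.div_add_mod']
        _ ≤ a * ‖vilenkinDirichletSum m (Mgen m K) x‖ + ‖vilenkinDirichletSum m q x‖ := by
            refine (norm_add_le _ _).trans (add_le_add ?_ ?_)
            · rw [norm_mul]; gcongr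
            · rw [norm_mul, norm_pow, norm_rademacher, one_pow, one_mul]
        _ ≤ B * ‖vilenkinDirichletSum m (Mgen m K) x‖
              + (B * ∑ t ∈ Ico N K, ‖vilenkinDirichletSum m (Mgen m t) x‖
                + (Mgen m N : ℝ) ^ 2) := by
            gcongr
            · exact_mod_cast ha.le.trans (hB K)
            · exact ih hq
        _ = B * ∑ t ∈ Ico N (K + 1), ‖vilenkinDirichletSum m (Mgen m t) x‖
              + (Mgen m N : ℝ) ^ 2 := by
            rw [sum_Ico_succ_top hNK]; ring

section cylinders

variable {m : ℕ → ℕ}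

lemma DependsOn.exists_eq_comp_restrict_range {β : Type*} [Nonempty β] {t : ℕ}
    {g : VilGroup m → β} (hg : DependsOn g (Set.Iio t)) :
    ∃ h : (Π i : range t, ZMod (m i)) → β, g = h ∘ (range t).restrict := by
  rw [← coe_range] at hg
  exact dependsOn_iff_exists_comp.1 hg

lemma exists_restrict_range_eq (t : ℕ) (z : Π i : range t, ZMod (m i)) :
    ∃ y : VilGroup m, (range t).restrict y = z ∧ y t = 0 :=
  ⟨fun i => if hi : i ∈ range t then z ⟨i, hi⟩ else 0, funext fun i => dif_pos i.2, by simp⟩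

lemma restrict_range_preimage (t : ℕ) (y : VilGroup m) :
    (range t).restrict (π := fun i => ZMod (m i)) ⁻¹' {(range t).restrict y} = cylVAt m t y := by
  ext x
  simp [cylVAt, funext_iff]

lemma restrict_range_preimage_inter (t : ℕ) (y : VilGroup m) :
    (range t).restrict (π := fun i => ZMod (m i)) ⁻¹' {(range t).restrict y} ∩ {x | x t = y t}
      = cylVAt m (t + 1) y := by
  ext x
  simp [cylVAt, funext_iff, -Order.lt_add_one_iff, Nat.forall_lt_succ_right]

variable [∀ k, NeZero (m k)]

lemma integral_comp_restrict_range (ν : Measure (VilGroup m)) [IsFiniteMeasure ν] (t : ℕ)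
    (h : (Π i : range t, ZMod (m i)) → ℝ) :
    ∫ x, h ((range t).restrict x) ∂ν = ∑ z, ν.real ((range t).restrict ⁻¹' {z}) * h z := by
  rw [← integral_map (measurable_restrict _).aemeasurable
    (Integrable.of_finite).aestronglyMeasurable, integral_fintype Integrable.of_finite]
  simp [map_measureReal_apply (measurable_restrict _) (measurableSet_singleton _)]

lemma DependsOn.integrable (ν : Measure (VilGroup m)) [IsFiniteMeasure ν] {t : ℕ}
    {g : VilGroup m → ℝ} (hg : DependsOn g (Set.Iio t)) : Integrable g ν := by
  obtain ⟨h, rfl⟩ := hg.exists_eq_comp_restrict_range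
  exact (integrable_map_measure Integrable.of_finite.aestronglyMeasurable
    (measurable_restrict _).aemeasurable).1 Integrable.of_finite

lemma natCast_mul_setIntegral_coord_eq_zero {μ : Measure (VilGroup m)} [IsFiniteMeasure μ]
    (hμ : IsVilHaar m μ) {t : ℕ} {g : VilGroup m → ℝ} (hg : DependsOn g (Set.Iio t)) :
    (m t : ℝ) * ∫ x in {x | x t = 0}, g x ∂μ = ∫ x, g x ∂μ := by
  obtain ⟨h, rfl⟩ := hg.exists_eq_comp_restrict_range
  simp only [Function.comp_apply]
  rw [integral_comp_restrict_range, integral_comp_restrict_range, mul_sum]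
  refine sum_congr rfl fun z _ => ?_
  obtain ⟨y, rfl, hy⟩ := exists_restrict_range_eq t z
  rw [measureReal_restrict_apply ((measurable_restrict _) (measurableSet_singleton _)), ← hy,
    restrict_range_preimage_inter, restrict_range_preimage, measureReal_def, measureReal_def,
    hμ, hμ, ENNReal.toReal_inv, ENNReal.toReal_inv, ENNReal.toReal_natCast,
    ENNReal.toReal_natCast, Mgen_succ, Nat.cast_mul]
  have : (m t : ℝ) ≠ 0 := NeZero.ne _
  field_simp

end cylinders

lemma measurableSet_cylV (m : ℕ → ℕ) (N : ℕ) : MeasurableSet (cylV m N) := by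
  rw [show cylV m N = cylVAt m N 0 from rfl, ← restrict_range_preimage]
  exact measurable_restrict _ (measurableSet_singleton _)

lemma setIntegral_compl_cylV_norm_vilenkinDirichletSum_Mgen {m : ℕ → ℕ} (hm : ∀ k, 2 ≤ m k)
    {μ : Measure (VilGroup m)} [IsFiniteMeasure μ] (hμ : IsVilHaar m μ) {N t : ℕ} (ht : N ≤ t) :
    ∫ x in (cylV m N)ᶜ, ‖vilenkinDirichletSum m (Mgen m t) x‖ ∂μ
      = ∫ x in (cylV m N)ᶜ, ‖vilenkinDirichletSum m (Mgen m N) x‖ ∂μ := by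
  have : ∀ k, NeZero (m k) := fun k => NeZero.of_gt (hm k)
  induction t, ht using Nat.le_induction with
  | base => rfl
  | succ t ht ih =>
    rw [← ih]
    set g := (cylV m N)ᶜ.indicator fun x => ‖vilenkinDirichletSum m (Mgen m t) x‖
    have hg : DependsOn g (Set.Iio t) := fun x y h => by
      have hmem : x ∈ cylV m N ↔ y ∈ cylV m N :=
        forall₂_congr fun j hj => by rw [h j (hj.trans_le ht)]
      dsimp only [g]
      by_cases hx : x ∈ cylV m N
      · rw [Set.indicator_of_notMem (Set.notMem_compl_iff.2 hx),
          Set.indicator_of_notMem (Set.notMem_compl_iff.2 (hmem.1 hx))]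
      · rw [Set.indicator_of_mem (Set.mem_compl hx),
          Set.indicator_of_mem (Set.mem_compl (mt hmem.2 hx)),
          vilenkinDirichletSum_dependsOn hm le_rfl h]
    have hstep : (cylV m N)ᶜ.indicator (fun x => ‖vilenkinDirichletSum m (Mgen m (t + 1)) x‖)
        = {x | x t = 0}.indicator fun x => (m t : ℝ) * g x := by
      ext x
      by_cases hx : x ∈ cylV m N
      · simp [g, hx, Set.indicator_apply]
      · have hxt : x ∉ cylV m t := fun h => hx fun j hj => h j (hj.trans_le ht)
        by_cases h0 : x t = 0 <;>
          simp [g, hx, h0, vilenkinDirichletSum_Mgen_succ hm hxt]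
    have hcoord : MeasurableSet {x : VilGroup m | x t = 0} :=
      measurable_pi_apply t (measurableSet_singleton 0)
    calc ∫ x in (cylV m N)ᶜ, ‖vilenkinDirichletSum m (Mgen m (t + 1)) x‖ ∂μ
        = ∫ x in {x | x t = 0}, (m t : ℝ) * g x ∂μ := by
          rw [← integral_indicator (measurableSet_cylV m N).compl, hstep,
            integral_indicator hcoord]
      _ = ∫ x, g x ∂μ := by
          rw [integral_const_mul, natCast_mul_setIntegral_coord_eq_zero hμ hg]
      _ = ∫ x in (cylV m N)ᶜ, ‖vilenkinDirichletSum m (Mgen m t) x‖ ∂μ :=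
          integral_indicator (measurableSet_cylV m N).compl

section integral_bound

variable {m : ℕ → ℕ} (hm : ∀ k, 2 ≤ m k) {μ : Measure (VilGroup m)}
  [IsProbabilityMeasure μ] (hμ : IsVilHaar m μ)
include hm hμ

lemma setIntegral_compl_cylV_norm_vilenkinDirichletSum_Mgen_le {N t : ℕ} (ht : N ≤ t) :
    ∫ x in (cylV m N)ᶜ, ‖vilenkinDirichletSum m (Mgen m t) x‖ ∂μ ≤ (Mgen m N : ℝ) ^ 2 := by
  have : ∀ k, NeZero (m k) := fun k => NeZero.of_gt (hm k)
  rw [setIntegral_compl_cylV_norm_vilenkinDirichletSum_Mgen hm hμ ht]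
  refine (Real.le_norm_self _).trans ((norm_setIntegral_le_of_norm_le_const (measure_lt_top _ _)
    fun x _ => ?_).trans (mul_le_of_le_one_right (sq_nonneg _) measureReal_le_one))
  rw [norm_norm]
  exact norm_vilenkinDirichletSum_le _ x

lemma setIntegral_compl_cylV_norm_vilenkinDirichletSum_le {B : ℕ} (hB : ∀ k, m k ≤ B) (N n : ℕ) :
    ∫ x in (cylV m N)ᶜ, ‖vilenkinDirichletSum m n x‖ ∂μ
      ≤ (Mgen m N : ℝ) ^ 2 * (B * (Nat.log 2 n + 1) + 1) := by
  have : ∀ k, NeZero (m k) := fun k => NeZero.of_gt (hm k)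
  set K := Nat.log 2 n + 1
  have hnK : n < Mgen m K :=
    (Nat.lt_pow_succ_log_self one_lt_two n).trans_le (two_pow_le_Mgen hm K)
  have hint : ∀ t, Integrable (fun x => ‖vilenkinDirichletSum m (Mgen m t) x‖)
      (μ.restrict (cylV m N)ᶜ) := fun t =>
    DependsOn.integrable _ fun x y h => by rw [vilenkinDirichletSum_dependsOn hm le_rfl h]
  calc ∫ x in (cylV m N)ᶜ, ‖vilenkinDirichletSum m n x‖ ∂μ
      ≤ ∫ x in (cylV m N)ᶜ, ((B : ℝ) * ∑ t ∈ Ico N K, ‖vilenkinDirichletSum m (Mgen m t) x‖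
          + (Mgen m N : ℝ) ^ 2) ∂μ :=
        integral_mono_of_nonneg (ae_of_all _ fun _ => norm_nonneg _)
          (((integrable_finsetSum _ fun t _ => hint t).const_mul _).add (integrable_const _))
          (ae_restrict_of_forall_mem (measurableSet_cylV m N).compl fun x hx =>
            norm_vilenkinDirichletSum_le_sum hm hB hx K hnK)
    _ = B * ∑ t ∈ Ico N K, ∫ x in (cylV m N)ᶜ, ‖vilenkinDirichletSum m (Mgen m t) x‖ ∂μ
          + μ.real (cylV m N)ᶜ * (Mgen m N : ℝ) ^ 2 := by
        rw [integral_add ((integrable_finsetSum _ fun t _ => hint t).const_mul _)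
          (integrable_const _), integral_const_mul, integral_finsetSum _ fun t _ => hint t,
          setIntegral_const, smul_eq_mul]
    _ ≤ B * ∑ _t ∈ Ico N K, (Mgen m N : ℝ) ^ 2 + 1 * (Mgen m N : ℝ) ^ 2 := by
        gcongr with t ht
        · exact setIntegral_compl_cylV_norm_vilenkinDirichletSum_Mgen_le hm hμ (mem_Ico.1 ht).1
        · exact measureReal_le_one
    _ = (Mgen m N : ℝ) ^ 2 * (B * (Ico N K).card + 1) := by
        rw [sum_const, nsmul_eq_mul]; ring
    _ ≤ (Mgen m N : ℝ) ^ 2 * (B * (Nat.log 2 n + 1) + 1) := by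
        gcongr
        exact_mod_cast (Nat.card_Ico N K).trans_le (Nat.sub_le K N)

end integral_bound

lemma tendsto_natLog_two_div_atTop :
    Tendsto (fun n : ℕ => (Nat.log 2 n : ℝ) / n) atTop (nhds 0) := by
  have hlog : Tendsto (fun n : ℕ => Real.logb 2 n / n) atTop (nhds 0) := by
    simpa [Real.logb, div_right_comm] using
      ((Real.isLittleO_log_id_atTop.tendsto_div_nhds_zero).comp
        tendsto_natCast_atTop_atTop).div_const (Real.log 2)
  exact squeeze_zero (fun n => by positivity)
    (fun n => div_le_div_of_nonneg_right (Real.natLog_le_logb n 2) n.cast_nonneg) hlog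

theorem vilenkinFejer_tail_integral_tendsto_zero_general
    (m : ℕ → ℕ) (hm : ∀ k, 2 ≤ m k) (hbd : ∃ B, ∀ k, m k ≤ B)
    (μ : Measure (VilGroup m)) [IsProbabilityMeasure μ] (hμ : IsVilHaar m μ)
    (N : ℕ) :
    Tendsto (fun n : ℕ => ∫ x in (cylV m N)ᶜ, ‖vilenkinFejer m n x‖ ∂μ)
      atTop (nhds 0) := by
  obtain ⟨B, hB⟩ := hbd
  set C : ℝ := (Mgen m N : ℝ) ^ 2
  have hbound : Tendsto (fun n : ℕ => C * (B * (Nat.log 2 n + 1) + 1) / n) atTop (nhds 0) := by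
    have := (tendsto_natLog_two_div_atTop.const_mul (C * B)).add
      (tendsto_one_div_atTop_nhds_zero_nat.const_mul (C * (B + 1)))
    simp only [mul_zero, add_zero] at this
    exact this.congr fun n => by ring
  refine squeeze_zero (fun n => setIntegral_nonneg (measurableSet_cylV m N).compl
    fun _ _ => norm_nonneg _) (fun n => ?_) hbound
  calc ∫ x in (cylV m N)ᶜ, ‖vilenkinFejer m n x‖ ∂μ
      = (∫ x in (cylV m N)ᶜ, ‖vilenkinDirichletSum m n x‖ ∂μ) / n := by
        simp only [vilenkinFejer_eq_one_div_mul, norm_mul, norm_div, norm_one,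
          Complex.norm_natCast]
        rw [integral_const_mul, one_div_mul_eq_div]
    _ ≤ C * (B * (Nat.log 2 n + 1) + 1) / n := by
        gcongr
        exact setIntegral_compl_cylV_norm_vilenkinDirichletSum_le hm hμ hB N n

/-- On a bounded Vilenkin group, for every fixed `N ∈ ℕ₊`,
`∫_{G_m \ I_N} |K_n^ψ| dμ → 0` as `n → ∞`. -/
theorem vilenkinFejer_tail_integral_tendsto_zero
    (m : ℕ → ℕ) (hm : ∀ k, 2 ≤ m k) (hbd : ∃ B, ∀ k, m k ≤ B)
    (μ : Measure (VilGroup m)) [IsProbabilityMeasure μ] (hμ : IsVilHaar m μ)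
    (N : ℕ) (hN : 0 < N) :
    Tendsto (fun n : ℕ => ∫ x in (cylV m N)ᶜ, ‖vilenkinFejer m n x‖ ∂μ)
      atTop (nhds 0) :=
  vilenkinFejer_tail_integral_tendsto_zero_general m hm hbd μ hμ N
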